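/- arXiv:2511.15519 — 2 statements merged into one kernel-verified Lean document; each statement's English description precedes it below -/
import Mathlib

section
/- Let τ ∈ ℂ with Im τ > 0 and let x, y, z ∈ ℂ. Then θ₃(z+x|τ)·θ₃(z+y|τ)·θ₃(z−x−y|τ) = A(x,y|τ)·θ₃(3z|3τ) + exp(iπτ/3)·C(−x,−y|τ)·exp(2iz)·θ₃(3z+πτ|3τ) + exp(iπτ/3)·C(x,y|τ)·exp(−2iz)·θ₃(3z−πτ|3τ). -/
open Complex

/-- The Jacobi theta function θ₃(z|τ). -/
noncomputable def theta3 (z τ : ℂ) : ℂ :=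
  ∑' n : ℤ, Complex.exp (Real.pi * Complex.I * τ * (n : ℂ) ^ 2) *
    Complex.exp (2 * (n : ℂ) * Complex.I * z)

/-- The theta series A(x,y|τ). -/
noncomputable def Afun (x y τ : ℂ) : ℂ :=
  ∑' k : ℤ, ∑' l : ℤ,
    Complex.exp (2 * Complex.I * Real.pi * τ * ((k : ℂ) ^ 2 + (k : ℂ) * (l : ℂ) + (l : ℂ) ^ 2)) *
    Complex.exp (2 * Complex.I * x * (2 * (l : ℂ) + (k : ℂ))) *
    Complex.exp (2 * Complex.I * y * (2 * (k : ℂ) + (l : ℂ)))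

/-- The theta series C(x,y|τ). -/
noncomputable def Cfun (x y τ : ℂ) : ℂ :=
  Complex.exp (2 * Complex.I * (x + y)) * ∑' k : ℤ, ∑' l : ℤ,
    Complex.exp (2 * Complex.I * Real.pi * τ *
      ((k : ℂ) ^ 2 + (k : ℂ) * (l : ℂ) + (l : ℂ) ^ 2 + (k : ℂ) + (l : ℂ) + 1 / 3)) *
    Complex.exp (2 * Complex.I * x * (2 * (l : ℂ) + (k : ℂ))) *
    Complex.exp (2 * Complex.I * y * (2 * (k : ℂ) + (l : ℂ)))

/-!
Expand the product as a sum over `(m, n, p) ∈ ℤ³` and sort the terms by the residue of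
`m + n + p` modulo `3`: writing `m + n + p = 3N + ρ` with `ρ ∈ {-1, 0, 1}`, `m = N + ℓ` and
`n = N + k`, the exponent of a term splits into a `θ₃(· | 3τ)`-term in `N` and a term of the
quadratic form `k² + kℓ + ℓ²` in `(k, ℓ)`. The class `ρ` contributes `θ₃(3z + ρπτ | 3τ)` times `A`
at arguments shifted by `-ρπτ/3`, and `C` is itself `A` at arguments shifted by `πτ/3`.
-/

open scoped Real

noncomputable def theta3_term (w τ : ℂ) (n : ℤ) : ℂ :=
  cexp (π * I * τ * (n : ℂ) ^ 2) * cexp (2 * (n : ℂ) * I * w)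

lemma theta3_eq_tsum_theta3_term (w τ : ℂ) : theta3 w τ = ∑' n : ℤ, theta3_term w τ n := rfl

lemma theta3_term_eq_jacobiTheta₂_term (w τ : ℂ) (n : ℤ) :
    theta3_term w τ n = jacobiTheta₂_term n (w / π) τ := by
  rw [theta3_term, jacobiTheta₂_term, ← exp_add]
  congr 1
  field_simp
  ring

lemma summable_norm_theta3_term {τ : ℂ} (hτ : 0 < τ.im) (w : ℂ) :
    Summable fun n : ℤ => ‖theta3_term w τ n‖ := by
  simp_rw [theta3_term_eq_jacobiTheta₂_term]
  exact summable_norm_iff.mpr ((summable_jacobiTheta₂_term_iff _ _).mpr hτ)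

lemma norm_theta3_term_zero_le_one {τ : ℂ} (hτ : 0 ≤ τ.im) (n : ℤ) :
    ‖theta3_term 0 τ n‖ ≤ 1 := by
  rw [theta3_term_eq_jacobiTheta₂_term, norm_jacobiTheta₂_term, Real.exp_le_one_iff, zero_div,
    zero_im, mul_zero, sub_zero, neg_mul, neg_mul, neg_nonpos]
  positivity

noncomputable def Afun_term (x y τ : ℂ) (p : ℤ × ℤ) : ℂ :=
  cexp (2 * I * π * τ * ((p.1 : ℂ) ^ 2 + (p.1 : ℂ) * (p.2 : ℂ) + (p.2 : ℂ) ^ 2)) *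
    cexp (2 * I * x * (2 * (p.2 : ℂ) + (p.1 : ℂ))) *
    cexp (2 * I * y * (2 * (p.1 : ℂ) + (p.2 : ℂ)))

/-- Comes from `k² + kℓ + ℓ² = (k² + ℓ² + (k + ℓ)²) / 2`; it makes the terms of `A` dominated by
products of `θ₃`-terms. -/
lemma Afun_term_eq_theta3_term_mul (x y τ : ℂ) (k l : ℤ) :
    Afun_term x y τ (k, l) =
      theta3_term (x + 2 * y) τ k * theta3_term (2 * x + y) τ l * theta3_term 0 τ (k + l) := by
  simp only [Afun_term, theta3_term, ← exp_add]
  congr 1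
  push_cast
  ring

lemma summable_norm_Afun_term {τ : ℂ} (hτ : 0 < τ.im) (x y : ℂ) :
    Summable fun p : ℤ × ℤ => ‖Afun_term x y τ p‖ := by
  refine ((summable_norm_theta3_term hτ (x + 2 * y)).mul_of_nonneg
    (summable_norm_theta3_term hτ (2 * x + y))
    (fun _ => norm_nonneg _) (fun _ => norm_nonneg _)).of_nonneg_of_le
      (fun _ => norm_nonneg _) fun ⟨k, l⟩ => ?_
  rw [Afun_term_eq_theta3_term_mul, norm_mul, norm_mul]
  exact mul_le_of_le_one_right (by positivity) (norm_theta3_term_zero_le_one hτ.le _)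

lemma Afun_eq_tsum {τ : ℂ} (hτ : 0 < τ.im) (x y : ℂ) :
    Afun x y τ = ∑' p : ℤ × ℤ, Afun_term x y τ p :=
  ((summable_norm_Afun_term hτ x y).of_norm.tsum_prod).symm

lemma Afun_neg (x y τ : ℂ) : Afun (-x) (-y) τ = Afun x y τ := by
  rw [Afun, ← (Equiv.neg ℤ).tsum_eq]
  refine tsum_congr fun k => ?_
  rw [← (Equiv.neg ℤ).tsum_eq]
  refine tsum_congr fun l => ?_
  simp only [Equiv.neg_apply, Int.cast_neg, ← exp_add]
  ring_nf

lemma Cfun_eq_Afun (x y τ : ℂ) :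
    Cfun x y τ = cexp (2 * I * (x + y)) * cexp (2 * π * I * τ / 3) *
      Afun (x + π * τ / 3) (y + π * τ / 3) τ := by
  rw [Cfun, Afun, ← tsum_mul_left, ← tsum_mul_left]
  refine tsum_congr fun k => ?_
  rw [← tsum_mul_left, ← tsum_mul_left]
  refine tsum_congr fun l => ?_
  simp only [← exp_add]
  ring_nf

/-- The inverse reads `N` and `r` off `m + n + p + 1 = 3 N + r`. -/
def residueEquiv : Fin 3 × ℤ × ℤ × ℤ ≃ ℤ × ℤ × ℤ where
  toFun := fun (r, N, k, l) => (N + l, N + k, N + ((r : ℕ) - 1 : ℤ) - k - l)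
  invFun := fun (m, n, p) =>
    let (N, r) := Int.divModEquiv 3 (m + n + p + 1)
    (r, N, n - N, m - N)
  left_inv := fun (r, N, k, l) => by
    have h := (Int.divModEquiv 3).apply_symm_apply (N, r)
    simp only [Int.divModEquiv_symm_apply, Nat.cast_ofNat] at h
    simp only [show N + l + (N + k) + (N + ((r : ℕ) - 1 : ℤ) - k - l) + 1 = N * 3 + (r : ℕ) by
      ring, h]
    simp
  right_inv := fun (m, n, p) => by
    have h := (Int.divModEquiv 3).symm_apply_apply (m + n + p + 1)
    simp only [Int.divModEquiv_symm_apply, Nat.cast_ofNat] at h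
    simp only [Prod.mk.injEq]
    omega

noncomputable def theta3_tripleTerm (x y z τ : ℂ) (m : ℤ × ℤ × ℤ) : ℂ :=
  theta3_term (z + x) τ m.1 * (theta3_term (z + y) τ m.2.1 * theta3_term (z - x - y) τ m.2.2)

lemma tsum_theta3_tripleTerm {τ : ℂ} (hτ : 0 < τ.im) (x y z : ℂ) :
    ∑' m, theta3_tripleTerm x y z τ m =
      theta3 (z + x) τ * theta3 (z + y) τ * theta3 (z - x - y) τ := by
  simp only [theta3_eq_tsum_theta3_term, mul_assoc]
  rw [tsum_mul_tsum_of_summable_norm (summable_norm_theta3_term hτ _)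
      (summable_norm_theta3_term hτ _),
    tsum_mul_tsum_of_summable_norm (summable_norm_theta3_term hτ _)
      ((summable_norm_theta3_term hτ _).mul_norm (summable_norm_theta3_term hτ _))]
  rfl

lemma summable_theta3_tripleTerm {τ : ℂ} (hτ : 0 < τ.im) (x y z : ℂ) :
    Summable (theta3_tripleTerm x y z τ) :=
  (summable_mul_of_summable_norm (summable_norm_theta3_term hτ (z + x))
    ((summable_norm_theta3_term hτ (z + y)).mul_norm (summable_norm_theta3_term hτ (z - x - y))) :)

lemma theta3_tripleTerm_eq_exp_mul (x y z τ : ℂ) (ρ N k l : ℤ) :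
    theta3_tripleTerm x y z τ (N + l, N + k, N + ρ - k - l) =
      cexp (π * I * τ * ρ ^ 2 + 2 * I * ρ * (z - x - y)) *
        (theta3_term (3 * z + ρ * π * τ) (3 * τ) N *
          Afun_term (x - ρ * π * τ / 3) (y - ρ * π * τ / 3) τ (k, l)) := by
  simp only [theta3_tripleTerm, theta3_term, Afun_term, ← exp_add]
  congr 1
  push_cast
  ring

noncomputable def tripleProductComponent (x y z τ : ℂ) (ρ : ℤ) : ℂ :=
  cexp (π * I * τ * ρ ^ 2 + 2 * I * ρ * (z - x - y)) * theta3 (3 * z + ρ * π * τ) (3 * τ) *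
    Afun (x - ρ * π * τ / 3) (y - ρ * π * τ / 3) τ

lemma tsum_theta3_tripleTerm_residueEquiv {τ : ℂ} (hτ : 0 < τ.im) (x y z : ℂ) (r : Fin 3) :
    ∑' q, theta3_tripleTerm x y z τ (residueEquiv (r, q)) =
      tripleProductComponent x y z τ ((r : ℕ) - 1) := by
  have h3τ : 0 < (3 * τ).im := by simpa using hτ
  rw [tripleProductComponent, mul_assoc, theta3_eq_tsum_theta3_term, Afun_eq_tsum hτ,
    tsum_mul_tsum_of_summable_norm (summable_norm_theta3_term h3τ _)
      (summable_norm_Afun_term hτ _ _), ← tsum_mul_left]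
  exact tsum_congr fun ⟨N, k, l⟩ => theta3_tripleTerm_eq_exp_mul x y z τ _ N k l

lemma theta3_mul_theta3_mul_theta3 {τ : ℂ} (hτ : 0 < τ.im) (x y z : ℂ) :
    theta3 (z + x) τ * theta3 (z + y) τ * theta3 (z - x - y) τ =
      tripleProductComponent x y z τ (-1) + tripleProductComponent x y z τ 0 +
        tripleProductComponent x y z τ 1 := by
  rw [← tsum_theta3_tripleTerm hτ, ← residueEquiv.tsum_eq,
    Summable.tsum_prod (f := fun p => theta3_tripleTerm x y z τ (residueEquiv p))
      (residueEquiv.summable_iff.mpr (summable_theta3_tripleTerm hτ x y z)),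
    tsum_fintype, Fin.sum_univ_three]
  simp only [tsum_theta3_tripleTerm_residueEquiv hτ]
  norm_num

lemma tripleProductComponent_zero (x y z τ : ℂ) :
    tripleProductComponent x y z τ 0 = Afun x y τ * theta3 (3 * z) (3 * τ) := by
  simp [tripleProductComponent, mul_comm]

lemma tripleProductComponent_one (x y z τ : ℂ) :
    tripleProductComponent x y z τ 1 = cexp (π * I * τ / 3) * Cfun (-x) (-y) τ *
      cexp (2 * I * z) * theta3 (3 * z + π * τ) (3 * τ) := by
  have hexp : cexp (π * I * τ * (1 : ℤ) ^ 2 + 2 * I * (1 : ℤ) * (z - x - y)) =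
      cexp (π * I * τ / 3) * cexp (2 * I * (-x + -y)) * cexp (2 * π * I * τ / 3) *
        cexp (2 * I * z) := by
    simp only [← exp_add]
    push_cast
    ring_nf
  rw [tripleProductComponent, hexp, Cfun_eq_Afun, ← Afun_neg]
  push_cast
  ring_nf

lemma tripleProductComponent_neg_one (x y z τ : ℂ) :
    tripleProductComponent x y z τ (-1) = cexp (π * I * τ / 3) * Cfun x y τ *
      cexp (-2 * I * z) * theta3 (3 * z - π * τ) (3 * τ) := by
  have hexp : cexp (π * I * τ * (-1 : ℤ) ^ 2 + 2 * I * (-1 : ℤ) * (z - x - y)) =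
      cexp (π * I * τ / 3) * cexp (2 * I * (x + y)) * cexp (2 * π * I * τ / 3) *
        cexp (-2 * I * z) := by
    simp only [← exp_add]
    push_cast
    ring_nf
  rw [tripleProductComponent, hexp, Cfun_eq_Afun]
  push_cast
  ring_nf

/-- Three-term theta expansion of the product `θ₃(z+x)θ₃(z+y)θ₃(z-x-y)`. -/
theorem theta3_product_expansion (τ : ℂ) (hτ : 0 < τ.im) (x y z : ℂ) :
    theta3 (z + x) τ * theta3 (z + y) τ * theta3 (z - x - y) τ
      = Afun x y τ * theta3 (3 * z) (3 * τ)
        + Complex.exp (Real.pi * Complex.I * τ / 3) * Cfun (-x) (-y) τ *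
            Complex.exp (2 * Complex.I * z) * theta3 (3 * z + Real.pi * τ) (3 * τ)
        + Complex.exp (Real.pi * Complex.I * τ / 3) * Cfun x y τ *
            Complex.exp (-2 * Complex.I * z) * theta3 (3 * z - Real.pi * τ) (3 * τ) := by
  rw [theta3_mul_theta3_mul_theta3 hτ, tripleProductComponent_zero, tripleProductComponent_one,
    tripleProductComponent_neg_one]
  ring
end

section
/- Let α and β be integers with 0 < α < 4β, and let p, a, y ∈ ℂ with |p| < 1, a ≠ 0, y ≠ 0. Then (∑_{m,n∈ℤ} (−1)^n p^{4(αm²+αmn+βn²)+4αm+2αn+α} a^{2m+1} y^n)² + (∑_{m,n∈ℤ} p^{4(αm²+αmn+βn²)} a^{2m} y^n)² = (∑_{m,n∈ℤ} (−1)^n p^{4(αm²+αmn+βn²)} a^{2m} y^n)² + (∑_{m,n∈ℤ} p^{4(αm²+αmn+βn²)+4αm+2αn+α} a^{2m+1} y^n)². (This is the two-variable generalization with q = p⁴, x = a², clearing the fractional exponents q^{α(m+1/2)²+α(m+1/2)n+βn²} x^{m+1/2}, using α(m+1/2)²+α(m+1/2)n+βn² = αm²+αmn+βn²+αm+αn/2+α/4.)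 -/
/-!
With `x = 2m` (resp. `2m + 1`) the exponent of `p` is `Q(x, n) = α (x + n)² + (4β - α) n²` and the
power of `a` is `a ^ x`. Writing `F₀(y)`, `F₁(y)` for the even and odd series, the identity is
`F₀(y)² - F₀(-y)² = F₁(y)² - F₁(-y)²`. Expanding the squares as sums over pairs
`((x₁, n₁), (x₂, n₂))`, both sides are twice the sum over the pairs with `n₁ + n₂` odd. On those,
swapping `n₁ ↔ n₂` while keeping each `xᵢ + nᵢ` fixed flips the parity of both `xᵢ`, and it
preserves `Q(x₁, n₁) + Q(x₂, n₂)`, `x₁ + x₂` and `n₁ + n₂`: a bijection between the even and the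
odd pairs matching the terms one by one.
-/

open Filter

lemma summable_pow_sq_mul_pow {r t : ℝ} (hr₀ : 0 ≤ r) (hr₁ : r < 1) (ht : 0 ≤ t) :
    Summable fun n : ℕ => r ^ (n ^ 2) * t ^ n := by
  have hsmall : ∀ᶠ n : ℕ in atTop, r ^ n * t ≤ 1 / 2 := by
    have h := (tendsto_pow_atTop_nhds_zero_of_lt_one hr₀ hr₁).mul_const t
    rw [zero_mul] at h
    exact h.eventually_le_const (by norm_num)
  refine .of_norm_bounded_eventually_nat summable_geometric_two ?_
  filter_upwards [hsmall] with n hn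
  rw [Real.norm_of_nonneg (by positivity), sq, pow_mul, ← mul_pow]
  exact pow_le_pow_left₀ (by positivity) hn n

lemma summable_pow_natAbs_sq_mul_zpow {r t : ℝ} (hr₀ : 0 ≤ r) (hr₁ : r < 1) (ht : 0 < t) :
    Summable fun n : ℤ => r ^ (n.natAbs ^ 2) * t ^ n := by
  refine .of_nat_of_neg ?_ ?_
  · simpa using summable_pow_sq_mul_pow hr₀ hr₁ ht.le
  · simpa [zpow_neg, ← inv_pow] using summable_pow_sq_mul_pow hr₀ hr₁ (inv_nonneg.2 ht.le)

lemma summable_norm_zpow_mul_zpow_mul_zpow {p b s : ℂ} (hp : ‖p‖ < 1) (hb : b ≠ 0)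
    (hs : s ≠ 0) {k : ℕ} (hk : k ≠ 0) {E : ℤ × ℤ → ℤ}
    (hE : ∀ v, v.1 ^ 2 + v.2 ^ 2 ≤ k * E v) :
    Summable fun v : ℤ × ℤ => ‖p ^ E v * b ^ v.1 * s ^ v.2‖ := by
  set σ := ‖p‖ ^ (k⁻¹ : ℝ)
  have hσ₀ : 0 ≤ σ := by positivity
  have hσ₁ : σ < 1 := Real.rpow_lt_one (norm_nonneg p) hp (by positivity)
  have hprod := (summable_pow_natAbs_sq_mul_zpow hσ₀ hσ₁ (norm_pos_iff.2 hb)).mul_of_nonneg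
    (summable_pow_natAbs_sq_mul_zpow hσ₀ hσ₁ (norm_pos_iff.2 hs))
    (fun _ => by positivity) (fun _ => by positivity)
  refine .of_nonneg_of_le (fun _ => norm_nonneg _) (fun ⟨m, n⟩ => ?_) hprod
  have hmn := hE (m, n)
  obtain ⟨e, he⟩ := Int.eq_ofNat_of_zero_le <|
    nonneg_of_mul_nonneg_right ((by positivity : (0 : ℤ) ≤ m ^ 2 + n ^ 2).trans hmn) (by omega)
  rw [he] at hmn
  have hexp : m.natAbs ^ 2 + n.natAbs ^ 2 ≤ k * e := by zify; simpa using hmn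
  calc ‖p ^ E (m, n) * b ^ m * s ^ n‖ = σ ^ (k * e) * ‖b‖ ^ m * ‖s‖ ^ n := by
        rw [norm_mul, norm_mul, norm_zpow, norm_zpow, norm_zpow, he, zpow_natCast, pow_mul,
          Real.rpow_inv_natCast_pow (norm_nonneg p) hk]
    _ ≤ σ ^ (m.natAbs ^ 2 + n.natAbs ^ 2) * ‖b‖ ^ m * ‖s‖ ^ n := by
        gcongr ?_ * _ * _
        exact pow_le_pow_of_le_one hσ₀ hσ₁.le hexp
    _ = σ ^ m.natAbs ^ 2 * ‖b‖ ^ m * (σ ^ n.natAbs ^ 2 * ‖s‖ ^ n) := by ring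

lemma sq_tsum_sub_sq_tsum {R ι : Type*} [NormedRing R] [CompleteSpace R] {f g : ι → R}
    (hf : Summable fun i => ‖f i‖) (hg : Summable fun i => ‖g i‖) :
    (∑' i, f i) ^ 2 - (∑' i, g i) ^ 2 = ∑' z : ι × ι, (f z.1 * f z.2 - g z.1 * g z.2) := by
  rw [sq, sq, tsum_mul_tsum_of_summable_norm hf hf, tsum_mul_tsum_of_summable_norm hg hg]
  exact ((summable_mul_of_summable_norm hf hf).tsum_sub (summable_mul_of_summable_norm hg hg)).symm

def thetaExp (α β x n : ℤ) : ℤ := α * x ^ 2 + 2 * α * x * n + 4 * β * n ^ 2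

/-- At `x = 2m` and `x = 2m + 1` this is the summand of the theorem: `x / 2` is the paper's `m`,
resp. `m + 1/2`, and `p ^ 4` its `q`. -/
noncomputable def thetaTerm (α β : ℤ) (p a y : ℂ) (x n : ℤ) : ℂ :=
  p ^ thetaExp α β x n * a ^ x * y ^ n

noncomputable def cosetThetaTerm (α β : ℤ) (p a y : ℂ) (ε : ℤ) (v : ℤ × ℤ) : ℂ :=
  thetaTerm α β p a y (2 * v.1 + ε) v.2

/-- On the pairs with `n₁ + n₂` odd, this is `(x₁, n₁), (x₂, n₂) ↦ (x₁ + n₁ - n₂, n₂),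
(x₂ + n₂ - n₁, n₁)` in the coordinates `x = 2m` of the source and `x = 2m + 1` of the target.
Elsewhere it is just some bijection, as the terms it is used on vanish there. -/
def swapParityEquiv : (ℤ × ℤ) × (ℤ × ℤ) ≃ (ℤ × ℤ) × (ℤ × ℤ) where
  toFun z := ((z.1.1 + (z.1.2 - z.2.2 - 1) / 2, z.2.2), (z.2.1 - (z.1.2 - z.2.2 + 1) / 2, z.1.2))
  invFun z := ((z.1.1 - (z.2.2 - z.1.2 - 1) / 2, z.2.2), (z.2.1 + (z.2.2 - z.1.2 + 1) / 2, z.1.2))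
  left_inv := by rintro ⟨⟨m₁, n₁⟩, m₂, n₂⟩; ext <;> simp
  right_inv := by rintro ⟨⟨m₁, n₁⟩, m₂, n₂⟩; ext <;> simp

section

variable {α β : ℤ}

lemma thetaExp_eq (x n : ℤ) : thetaExp α β x n = α * (x + n) ^ 2 + (4 * β - α) * n ^ 2 := by
  unfold thetaExp; ring

lemma thetaExp_nonneg (hα : 0 ≤ α) (hαβ : α ≤ 4 * β) (x n : ℤ) : 0 ≤ thetaExp α β x n := by
  rw [thetaExp_eq]
  exact add_nonneg (mul_nonneg hα (sq_nonneg _)) (mul_nonneg (by omega) (sq_nonneg _))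

lemma sq_add_sq_le_thetaExp (hα : 0 < α) (hαβ : α < 4 * β) (x n : ℤ) :
    x ^ 2 + n ^ 2 ≤ 3 * thetaExp α β x n := by
  rw [thetaExp_eq]
  nlinarith [sq_nonneg (x + 2 * n), mul_nonneg (by omega : 0 ≤ α - 1) (sq_nonneg (x + n)),
    mul_nonneg (by omega : 0 ≤ 4 * β - α - 1) (sq_nonneg n)]

lemma thetaExp_add_thetaExp_swap {x₁ n₁ x₂ n₂ x₁' x₂' : ℤ} (h₁ : x₁' + n₂ = x₁ + n₁)
    (h₂ : x₂' + n₁ = x₂ + n₂) :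
    thetaExp α β x₁ n₁ + thetaExp α β x₂ n₂ = thetaExp α β x₁' n₂ + thetaExp α β x₂' n₁ := by
  simp only [thetaExp_eq, ← h₁, ← h₂]
  ring

variable {p a y : ℂ}

lemma thetaTerm_neg (x n : ℤ) :
    thetaTerm α β p a (-y) x n = (-1) ^ n * thetaTerm α β p a y x n := by
  rw [thetaTerm, thetaTerm, neg_eq_neg_one_mul, mul_zpow]
  ring

lemma thetaTerm_two_mul (m n : ℤ) : thetaTerm α β p a y (2 * m) n
    = p ^ (4 * (α * m ^ 2 + α * m * n + β * n ^ 2)) * a ^ (2 * m) * y ^ n := by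
  rw [thetaTerm, thetaExp]
  ring_nf

lemma thetaTerm_two_mul_add_one (m n : ℤ) : thetaTerm α β p a y (2 * m + 1) n
    = p ^ (4 * (α * m ^ 2 + α * m * n + β * n ^ 2) + 4 * α * m + 2 * α * n + α)
      * a ^ (2 * m + 1) * y ^ n := by
  rw [thetaTerm, thetaExp]
  ring_nf

lemma thetaTerm_mul_sub_neg (x₁ n₁ x₂ n₂ : ℤ) :
    thetaTerm α β p a y x₁ n₁ * thetaTerm α β p a y x₂ n₂
        - thetaTerm α β p a (-y) x₁ n₁ * thetaTerm α β p a (-y) x₂ n₂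
      = (1 - (-1) ^ (n₁ + n₂)) * (thetaTerm α β p a y x₁ n₁ * thetaTerm α β p a y x₂ n₂) := by
  rw [thetaTerm_neg, thetaTerm_neg, zpow_add₀ (by norm_num)]
  ring

lemma thetaTerm_mul_thetaTerm_swap (hα : 0 ≤ α) (hαβ : α ≤ 4 * β) (ha : a ≠ 0)
    {x₁ n₁ x₂ n₂ x₁' x₂' : ℤ} (h₁ : x₁' + n₂ = x₁ + n₁) (h₂ : x₂' + n₁ = x₂ + n₂) :
    thetaTerm α β p a y x₁ n₁ * thetaTerm α β p a y x₂ n₂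
      = thetaTerm α β p a y x₁' n₂ * thetaTerm α β p a y x₂' n₁ := by
  -- `p` may vanish, so `zpow_add'` needs the exponents to be nonnegative
  have hp : p ^ thetaExp α β x₁ n₁ * p ^ thetaExp α β x₂ n₂
      = p ^ thetaExp α β x₁' n₂ * p ^ thetaExp α β x₂' n₁ := by
    have := thetaExp_nonneg hα hαβ x₁ n₁
    have := thetaExp_nonneg hα hαβ x₂ n₂
    have := thetaExp_nonneg hα hαβ x₁' n₂
    have := thetaExp_nonneg hα hαβ x₂' n₁
    rw [← zpow_add' (.inr (by omega)), ← zpow_add' (.inr (by omega)),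
      thetaExp_add_thetaExp_swap h₁ h₂]
  have ha' : a ^ x₁ * a ^ x₂ = a ^ x₁' * a ^ x₂' := by
    rw [← zpow_add₀ ha, ← zpow_add₀ ha]
    congr 1
    omega
  unfold thetaTerm
  calc _ = (p ^ thetaExp α β x₁ n₁ * p ^ thetaExp α β x₂ n₂) * (a ^ x₁ * a ^ x₂)
          * (y ^ n₁ * y ^ n₂) := by ring
    _ = _ := by rw [hp, ha']; ring

lemma cosetThetaTerm_mul_sub_neg_eq (hα : 0 ≤ α) (hαβ : α ≤ 4 * β) (ha : a ≠ 0)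
    (z : (ℤ × ℤ) × (ℤ × ℤ)) :
    cosetThetaTerm α β p a y 0 z.1 * cosetThetaTerm α β p a y 0 z.2
        - cosetThetaTerm α β p a (-y) 0 z.1 * cosetThetaTerm α β p a (-y) 0 z.2
      = cosetThetaTerm α β p a y 1 (swapParityEquiv z).1
          * cosetThetaTerm α β p a y 1 (swapParityEquiv z).2
        - cosetThetaTerm α β p a (-y) 1 (swapParityEquiv z).1
          * cosetThetaTerm α β p a (-y) 1 (swapParityEquiv z).2 := by
  obtain ⟨⟨m₁, n₁⟩, m₂, n₂⟩ := z
  simp only [cosetThetaTerm, swapParityEquiv, Equiv.coe_fn_mk, thetaTerm_mul_sub_neg,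
    add_comm n₂ n₁]
  rcases Int.even_or_odd (n₁ + n₂) with h | ⟨k, hk⟩
  · simp [h.neg_one_zpow]
  · congr 1
    apply thetaTerm_mul_thetaTerm_swap hα hαβ ha <;> omega

variable (hα : 0 < α) (hαβ : α < 4 * β) (hp : ‖p‖ < 1) (ha : a ≠ 0) (hy : y ≠ 0)
include hα hαβ hp ha hy

lemma summable_norm_thetaTerm : Summable fun v : ℤ × ℤ => ‖thetaTerm α β p a y v.1 v.2‖ :=
  summable_norm_zpow_mul_zpow_mul_zpow hp ha hy three_ne_zero fun v => by
    exact_mod_cast sq_add_sq_le_thetaExp hα hαβ v.1 v.2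

lemma summable_norm_cosetThetaTerm (ε : ℤ) :
    Summable fun v : ℤ × ℤ => ‖cosetThetaTerm α β p a y ε v‖ := by
  have hinj : Function.Injective fun v : ℤ × ℤ => (2 * v.1 + ε, v.2) :=
    fun v w h => by simp only [Prod.mk.injEq] at h; ext <;> omega
  simpa only [Function.comp_def, cosetThetaTerm] using
    (summable_norm_thetaTerm hα hαβ hp ha hy).comp_injective hinj

lemma tsum_cosetThetaTerm (ε : ℤ) :
    ∑' v, cosetThetaTerm α β p a y ε v = ∑' (m : ℤ) (n : ℤ), thetaTerm α β p a y (2 * m + ε) n :=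
  (summable_norm_cosetThetaTerm hα hαβ hp ha hy ε).of_norm.tsum_prod

end

/-- Two-variable generalization of the Chan–Chan–Solé identity for the form
`α m² + α mn + β n²` (with `q = p⁴`, `x = a²` clearing fractional exponents). -/
theorem gen_jacobi_two_variable_aab (α β : ℤ) (hα : 0 < α) (hαβ : α < 4 * β)
    (p a y : ℂ) (hp : ‖p‖ < 1) (ha : a ≠ 0) (hy : y ≠ 0) :
    (∑' m : ℤ, ∑' n : ℤ, (-1 : ℂ) ^ n *
        p ^ (4 * (α * m ^ 2 + α * m * n + β * n ^ 2) + 4 * α * m + 2 * α * n + α) *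
        a ^ (2 * m + 1) * y ^ n) ^ 2
      + (∑' m : ℤ, ∑' n : ℤ,
          p ^ (4 * (α * m ^ 2 + α * m * n + β * n ^ 2)) * a ^ (2 * m) * y ^ n) ^ 2
      = (∑' m : ℤ, ∑' n : ℤ, (-1 : ℂ) ^ n *
          p ^ (4 * (α * m ^ 2 + α * m * n + β * n ^ 2)) * a ^ (2 * m) * y ^ n) ^ 2
        + (∑' m : ℤ, ∑' n : ℤ,
            p ^ (4 * (α * m ^ 2 + α * m * n + β * n ^ 2) + 4 * α * m + 2 * α * n + α) *
            a ^ (2 * m + 1) * y ^ n) ^ 2 := by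
  have hy' : -y ≠ 0 := neg_ne_zero.2 hy
  have hsum := fun s (hs : s ≠ 0) => summable_norm_cosetThetaTerm hα hαβ hp ha hs
  have key : (∑' v, cosetThetaTerm α β p a y 0 v) ^ 2 - (∑' v, cosetThetaTerm α β p a (-y) 0 v) ^ 2
      = (∑' v, cosetThetaTerm α β p a y 1 v) ^ 2
        - (∑' v, cosetThetaTerm α β p a (-y) 1 v) ^ 2 := by
    rw [sq_tsum_sub_sq_tsum (hsum y hy 0) (hsum _ hy' 0),
      sq_tsum_sub_sq_tsum (hsum y hy 1) (hsum _ hy' 1)]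
    conv_rhs => rw [← swapParityEquiv.tsum_eq]
    exact tsum_congr (cosetThetaTerm_mul_sub_neg_eq hα.le hαβ.le ha)
  simp only [tsum_cosetThetaTerm hα hαβ hp ha hy, tsum_cosetThetaTerm hα hαβ hp ha hy', add_zero,
    thetaTerm_neg] at key
  simp only [thetaTerm_two_mul, thetaTerm_two_mul_add_one, mul_assoc] at key ⊢
  linear_combination key
end
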